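/- arXiv:1611.09049 — 3 statements merged into one kernel-verified Lean document; each statement's English description precedes it below -/
import Mathlib

section
/- Weighted fractional Hermite–Hadamard inequality on time scales (right inequality), specialized to T = ℝ: Let α ∈ (0,1], let 0 < a < b be real numbers, let f : [a,b] → ℝ be continuous and convex, and let w : [a,b] → ℝ be continuous with w(t) ≥ 0 for all t and W := ∫_a^b w(t)·t^{α−1} dt > 0. Set x_{w,α} := (∫_a^b t·w(t)·t^{α−1} dt)/W. Then (1/W)·∫_a^b f(t)·w(t)·t^{α−1} dt ≤ ((b − x_{w,α})/(b − a))·f(a) + ((x_{w,α} − a)/(b − a))·f(b). -/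
/-- Weighted fractional Hermite–Hadamard inequality on time scales
(right inequality), specialized to `T = ℝ`. -/
theorem bht_hermite_hadamard_right_real (α : ℝ) (hα0 : 0 < α) (hα1 : α ≤ 1)
    (a b : ℝ) (ha : 0 < a) (hab : a < b)
    (f : ℝ → ℝ) (hfc : ContinuousOn f (Set.Icc a b))
    (hfconv : ConvexOn ℝ (Set.Icc a b) f)
    (w : ℝ → ℝ) (hwc : ContinuousOn w (Set.Icc a b))
    (hw : ∀ t, 0 ≤ w t)
    (W : ℝ) (hW : W = ∫ t in a..b, w t * t ^ (α - 1)) (hWpos : 0 < W)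
    (x : ℝ) (hx : x = (∫ t in a..b, t * w t * t ^ (α - 1)) / W) :
    (1 / W) * ∫ t in a..b, f t * w t * t ^ (α - 1) ≤
      ((b - x) / (b - a)) * f a + ((x - a) / (b - a)) * f b := by
  have hba : 0 < b - a := by linarith
  have hab' : a ≤ b := hab.le
  -- continuity of the weight t^(α-1)
  have hpow : ContinuousOn (fun t : ℝ => t ^ (α - 1)) (Set.Icc a b) := by
    apply ContinuousOn.rpow_const continuousOn_id
    intro t ht
    exact Or.inl (ne_of_gt (lt_of_lt_of_le ha ht.1))
  have hg : ContinuousOn (fun t : ℝ => w t * t ^ (α - 1)) (Set.Icc a b) := hwc.mul hpow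
  have huicc : Set.uIcc a b = Set.Icc a b := Set.uIcc_of_le hab'
  have hintg : IntervalIntegrable (fun t : ℝ => w t * t ^ (α - 1)) MeasureTheory.volume a b :=
    (huicc ▸ hg).intervalIntegrable
  have hinttg : IntervalIntegrable (fun t : ℝ => t * (w t * t ^ (α - 1)))
      MeasureTheory.volume a b :=
    (huicc ▸ (continuousOn_id.mul hg)).intervalIntegrable
  have hintfg : IntervalIntegrable (fun t : ℝ => f t * w t * t ^ (α - 1))
      MeasureTheory.volume a b := by
    have h : ContinuousOn (fun t : ℝ => f t * w t * t ^ (α - 1)) (Set.Icc a b) :=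
      (hfc.mul hwc).mul hpow
    exact (huicc ▸ h).intervalIntegrable
  set c1 : ℝ := (b * f a - a * f b) / (b - a) with hc1
  set c2 : ℝ := (f b - f a) / (b - a) with hc2
  have hintrhs : IntervalIntegrable (fun t : ℝ => c1 * (w t * t ^ (α - 1)) +
      c2 * (t * (w t * t ^ (α - 1)))) MeasureTheory.volume a b :=
    (hintg.const_mul c1).add (hinttg.const_mul c2)
  -- pointwise convexity bound
  have hpt : ∀ t ∈ Set.Icc a b, f t * w t * t ^ (α - 1) ≤
      c1 * (w t * t ^ (α - 1)) + c2 * (t * (w t * t ^ (α - 1))) := by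
    intro t ht
    have hwt : 0 ≤ w t * t ^ (α - 1) := by
      apply mul_nonneg (hw t)
      exact Real.rpow_nonneg (le_of_lt (lt_of_lt_of_le ha ht.1)) _
    have hconv : f t ≤ ((b - t) / (b - a)) * f a + ((t - a) / (b - a)) * f b := by
      have h1 : (0:ℝ) ≤ (b - t) / (b - a) := by
        apply div_nonneg _ hba.le; linarith [ht.2]
      have h2 : (0:ℝ) ≤ (t - a) / (b - a) := by
        apply div_nonneg _ hba.le; linarith [ht.1]
      have hsum : (b - t) / (b - a) + (t - a) / (b - a) = 1 := by
        field_simp; ring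
      have := hfconv.2 (Set.left_mem_Icc.mpr hab') (Set.right_mem_Icc.mpr hab') h1 h2 hsum
      have hcomb : (b - t) / (b - a) * a + (t - a) / (b - a) * b = t := by
        field_simp; ring
      simp only [smul_eq_mul] at this
      rwa [hcomb] at this
    have h2 : f t * (w t * t ^ (α - 1)) ≤
        (((b - t) / (b - a)) * f a + ((t - a) / (b - a)) * f b) * (w t * t ^ (α - 1)) :=
      mul_le_mul_of_nonneg_right hconv hwt
    calc f t * w t * t ^ (α - 1) = f t * (w t * t ^ (α - 1)) := by ring
      _ ≤ (((b - t) / (b - a)) * f a + ((t - a) / (b - a)) * f b) * (w t * t ^ (α - 1)) := h2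
      _ = c1 * (w t * t ^ (α - 1)) + c2 * (t * (w t * t ^ (α - 1))) := by
          rw [hc1, hc2]; field_simp; ring
  have hmono := intervalIntegral.integral_mono_on hab' hintfg hintrhs hpt
  have hI1 : (∫ t in a..b, t * w t * t ^ (α - 1)) =
      ∫ t in a..b, t * (w t * t ^ (α - 1)) := by
    congr 1; ext t; ring
  have hsplit : (∫ t in a..b, c1 * (w t * t ^ (α - 1)) + c2 * (t * (w t * t ^ (α - 1)))) =
      c1 * W + c2 * (∫ t in a..b, t * (w t * t ^ (α - 1))) := by
    rw [intervalIntegral.integral_add (hintg.const_mul c1) (hinttg.const_mul c2),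
      intervalIntegral.integral_const_mul, intervalIntegral.integral_const_mul, hW]
  set I1 : ℝ := ∫ t in a..b, t * (w t * t ^ (α - 1)) with hI1def
  have hkey : (∫ t in a..b, f t * w t * t ^ (α - 1)) ≤ c1 * W + c2 * I1 := by
    rw [← hsplit]; exact hmono
  have hxval : x = I1 / W := by rw [hx, hI1]
  rw [hxval, hc1] at *
  have hWne : W ≠ 0 := ne_of_gt hWpos
  have hrhseq : ((b - I1 / W) / (b - a)) * f a + ((I1 / W - a) / (b - a)) * f b =
      ((b * f a - a * f b) / (b - a) * W + c2 * I1) / W := by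
    rw [hc2]; field_simp; ring
  have hdiv : ((b * f a - a * f b) / (b - a) * W + c2 * I1) / W =
      (1 / W) * ((b * f a - a * f b) / (b - a) * W + c2 * I1) := by ring
  rw [hrhseq, hdiv]
  exact mul_le_mul_of_nonneg_left hkey (by positivity)
end

section
/- Reversed weighted fractional Hermite–Hadamard inequality for concave functions, specialized to T = ℝ: Let α ∈ (0,1], let 0 < a < b be real numbers, let f : [a,b] → ℝ be continuous and concave, and let w : [a,b] → ℝ be continuous with w(t) ≥ 0 for all t and W := ∫_a^b w(t)·t^{α−1} dt > 0. Set x_{w,α} := (∫_a^b t·w(t)·t^{α−1} dt)/W. Then ((b − x_{w,α})/(b − a))·f(a) + ((x_{w,α} − a)/(b − a))·f(b) ≤ (1/W)·∫_a^b f(t)·w(t)·t^{α−1} dt ≤ f(x_{w,α}). -/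
open MeasureTheory Set
open scoped NNReal ENNReal

set_option maxHeartbeats 1000000

/-- Reversed weighted fractional Hermite–Hadamard inequality for concave
functions, specialized to `T = ℝ`. -/
theorem bht_hermite_hadamard_concave_real (α : ℝ) (hα0 : 0 < α) (hα1 : α ≤ 1)
    (a b : ℝ) (ha : 0 < a) (hab : a < b)
    (f : ℝ → ℝ) (hfc : ContinuousOn f (Set.Icc a b))
    (hfconc : ConcaveOn ℝ (Set.Icc a b) f)
    (w : ℝ → ℝ) (hwc : ContinuousOn w (Set.Icc a b))
    (hw : ∀ t, 0 ≤ w t)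
    (W : ℝ) (hW : W = ∫ t in a..b, w t * t ^ (α - 1)) (hWpos : 0 < W)
    (x : ℝ) (hx : x = (∫ t in a..b, t * w t * t ^ (α - 1)) / W) :
    ((b - x) / (b - a)) * f a + ((x - a) / (b - a)) * f b ≤
        (1 / W) * ∫ t in a..b, f t * w t * t ^ (α - 1) ∧
      (1 / W) * ∫ t in a..b, f t * w t * t ^ (α - 1) ≤ f x := by
  have hab' : a ≤ b := hab.le
  have hba : (0:ℝ) < b - a := sub_pos.2 hab
  have hWne : W ≠ 0 := hWpos.ne'
  set ρ : ℝ → ℝ := fun t => w t * t ^ (α - 1) with hρdef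
  have hpc : ContinuousOn (fun t : ℝ => t ^ (α - 1)) (Set.Icc a b) := fun t ht =>
    (Real.continuousAt_rpow_const t (α - 1)
      (Or.inl (ha.trans_le ht.1).ne')).continuousWithinAt
  have hρc : ContinuousOn ρ (Set.Icc a b) := hwc.mul hpc
  have hρnn : ∀ t ∈ Set.Icc a b, 0 ≤ ρ t := fun t ht =>
    mul_nonneg (hw t) (Real.rpow_nonneg (ha.le.trans ht.1) _)
  have htρc : ContinuousOn (fun t => t * ρ t) (Set.Icc a b) := continuousOn_id.mul hρc
  have hfρc : ContinuousOn (fun t => f t * ρ t) (Set.Icc a b) := hfc.mul hρc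
  have huIcc : Set.uIcc a b = Set.Icc a b := Set.uIcc_of_le hab'
  have h1 : IntervalIntegrable ρ volume a b :=
    (show ContinuousOn ρ (Set.uIcc a b) by rwa [huIcc]).intervalIntegrable
  have h2 : IntervalIntegrable (fun t => t * ρ t) volume a b :=
    (show ContinuousOn _ (Set.uIcc a b) by rwa [huIcc]).intervalIntegrable
  have h3 : IntervalIntegrable (fun t => f t * ρ t) volume a b :=
    (show ContinuousOn _ (Set.uIcc a b) by rwa [huIcc]).intervalIntegrable
  have hWρ : W = ∫ t in a..b, ρ t := hW
  have hI1 : (∫ t in a..b, t * ρ t) = x * W := by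
    have e : (∫ t in a..b, t * w t * t ^ (α - 1)) = ∫ t in a..b, t * ρ t := by
      simp only [hρdef, mul_assoc]
    rw [hx, e]
    field_simp
  have hIf : (∫ t in a..b, f t * w t * t ^ (α - 1)) = ∫ t in a..b, f t * ρ t := by
    simp only [hρdef, mul_assoc]
  -- Left inequality
  have chord_le : ∀ t ∈ Set.Icc a b,
      ((b - t) / (b - a)) * f a + ((t - a) / (b - a)) * f b ≤ f t := by
    intro t ht
    have hp : 0 ≤ (b - t) / (b - a) := div_nonneg (sub_nonneg.2 ht.2) hba.le
    have hq : 0 ≤ (t - a) / (b - a) := div_nonneg (sub_nonneg.2 ht.1) hba.le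
    have hpq : (b - t) / (b - a) + (t - a) / (b - a) = 1 := by field_simp; ring
    have h := hfconc.2 (Set.left_mem_Icc.2 hab') (Set.right_mem_Icc.2 hab') hp hq hpq
    have ht' : ((b - t) / (b - a)) • a + ((t - a) / (b - a)) • b = t := by
      simp only [smul_eq_mul]; field_simp; ring
    rw [ht'] at h
    simpa [smul_eq_mul] using h
  have hchordc : Continuous fun t : ℝ =>
      ((b - t) / (b - a)) * f a + ((t - a) / (b - a)) * f b := by fun_prop
  have h4 : IntervalIntegrable
      (fun t => (((b - t) / (b - a)) * f a + ((t - a) / (b - a)) * f b) * ρ t) volume a b :=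
    (show ContinuousOn _ (Set.uIcc a b) by
      rw [huIcc]; exact hchordc.continuousOn.mul hρc).intervalIntegrable
  have step1 : (∫ t in a..b, (((b - t) / (b - a)) * f a + ((t - a) / (b - a)) * f b) * ρ t)
      ≤ ∫ t in a..b, f t * ρ t := by
    refine intervalIntegral.integral_mono_on hab' h4 h3 fun t ht => ?_
    exact mul_le_mul_of_nonneg_right (chord_le t ht) (hρnn t ht)
  have decomp : (∫ t in a..b, (((b - t) / (b - a)) * f a + ((t - a) / (b - a)) * f b) * ρ t)
      = ((b * f a - a * f b) / (b - a)) * (∫ t in a..b, ρ t)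
        + ((f b - f a) / (b - a)) * (∫ t in a..b, t * ρ t) := by
    rw [← intervalIntegral.integral_const_mul,
      ← intervalIntegral.integral_const_mul,
      ← intervalIntegral.integral_add (h1.const_mul _) (h2.const_mul _)]
    refine intervalIntegral.integral_congr fun t ht => ?_
    have hne : b - a ≠ 0 := hba.ne'
    field_simp
    ring
  have left : ((b - x) / (b - a)) * f a + ((x - a) / (b - a)) * f b ≤
      (1 / W) * ∫ t in a..b, f t * w t * t ^ (α - 1) := by
    rw [hIf, one_div, inv_mul_eq_div, le_div_iff₀ hWpos]
    calc (((b - x) / (b - a)) * f a + ((x - a) / (b - a)) * f b) * W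
        = ((b * f a - a * f b) / (b - a)) * W + ((f b - f a) / (b - a)) * (x * W) := by
          field_simp; ring
      _ = ∫ t in a..b, (((b - t) / (b - a)) * f a + ((t - a) / (b - a)) * f b) * ρ t := by
          rw [decomp, ← hWρ, hI1]
      _ ≤ ∫ t in a..b, f t * ρ t := step1
  -- Right inequality via Jensen
  have hρae : AEMeasurable (fun t => Real.toNNReal (ρ t)) (volume.restrict (Set.Icc a b)) :=
    measurable_real_toNNReal.comp_aemeasurable (hρc.aemeasurable measurableSet_Icc)
  set ν : Measure ℝ := (volume.restrict (Set.Icc a b)).withDensity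
    (fun t => ((Real.toNNReal (ρ t) : ℝ≥0) : ENNReal)) with hνdef
  have hcoe : (fun t => ((Real.toNNReal (ρ t) : ℝ≥0) : ℝ))
      =ᵐ[volume.restrict (Set.Icc a b)] ρ := by
    filter_upwards [ae_restrict_mem measurableSet_Icc] with t ht
    exact Real.coe_toNNReal _ (hρnn t ht)
  have hρint : IntegrableOn ρ (Set.Icc a b) := hρc.integrableOn_compact isCompact_Icc
  have hIccW : (∫ t in Set.Icc a b, ρ t) = W := by
    rw [hWρ, intervalIntegral.integral_of_le hab', ← MeasureTheory.integral_Icc_eq_integral_Ioc]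
  have hνuniv : ν Set.univ = ENNReal.ofReal W := by
    rw [hνdef, withDensity_apply _ MeasurableSet.univ, Measure.restrict_univ,
      lintegral_coe_eq_integral _ (hρint.congr hcoe.symm)]
    rw [integral_congr_ae hcoe, hIccW]
  haveI : IsFiniteMeasure ν := ⟨by rw [hνuniv]; exact ENNReal.ofReal_lt_top⟩
  haveI : NeZero ν := by
    refine ⟨Measure.measure_univ_ne_zero.mp ?_⟩
    rw [hνuniv]
    simp [ENNReal.ofReal_eq_zero, not_le, hWpos]
  have conv : ∀ g : ℝ → ℝ, (IntegrableOn (fun t => g t * ρ t) (Set.Icc a b)) →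
      (∫ t, g t ∂ν = ∫ t in a..b, g t * ρ t) ∧ Integrable g ν := by
    intro g hint
    have haeq : (fun t => Real.toNNReal (ρ t) • g t)
        =ᵐ[volume.restrict (Set.Icc a b)] fun t => g t * ρ t := by
      filter_upwards [ae_restrict_mem measurableSet_Icc] with t ht
      simp [NNReal.smul_def, Real.coe_toNNReal _ (hρnn t ht), mul_comm]
    constructor
    · rw [hνdef, integral_withDensity_eq_integral_smul₀ hρae g,
        intervalIntegral.integral_of_le hab', ← MeasureTheory.integral_Icc_eq_integral_Ioc]
      exact integral_congr_ae haeq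
    · rw [hνdef, integrable_withDensity_iff_integrable_smul₀ hρae]
      exact hint.congr haeq.symm
  have cid := conv (fun t => t) (htρc.integrableOn_compact isCompact_Icc)
  have cf := conv f (hfρc.integrableOn_compact isCompact_Icc)
  have hmem : ∀ᵐ t ∂ν, (fun s => s) t ∈ Set.Icc a b := by
    have h0 : ∀ᵐ t ∂(volume.restrict (Set.Icc a b)), t ∈ Set.Icc a b :=
      ae_restrict_mem measurableSet_Icc
    exact h0.filter_mono
      ((withDensity_absolutelyContinuous (volume.restrict (Set.Icc a b)) _).ae_le)
  have jensen := hfconc.le_map_average hfc isClosed_Icc hmem cid.2 cf.2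
  have havg_id : (⨍ t, (fun s => s) t ∂ν) = x := by
    rw [average_eq, measureReal_def, hνuniv, ENNReal.toReal_ofReal hWpos.le, cid.1, hI1]
    simp [smul_eq_mul]
    field_simp
  have havg_f : (⨍ t, f ((fun s => s) t) ∂ν) = (1 / W) * ∫ t in a..b, f t * w t * t ^ (α - 1) := by
    rw [average_eq, measureReal_def, hνuniv, ENNReal.toReal_ofReal hWpos.le, cf.1, hIf]
    simp [smul_eq_mul, one_div]
  rw [havg_id, havg_f] at jensen
  exact ⟨left, jensen⟩
end

section
/- Reverse Hölder fractional inequality on time scales, specialized to T = ℤ: Let α ∈ (0,1], let a, b be natural numbers with 1 ≤ a < b, let f, g, h : ℕ → ℝ with f(t) ≠ 0 for all t ∈ {a, …, b−1}, and let p < 0 and q satisfy 1/p + 1/q = 1 (so 0 < q < 1). Then ∑_{t=a}^{b−1} |f(t)g(t)|·|h(t)|·t^{α−1} ≥ (∑_{t=a}^{b−1} |f(t)|^p·|h(t)|·t^{α−1})^{1/p} · (∑_{t=a}^{b−1} |g(t)|^q·|h(t)|·t^{α−1})^{1/q}. -/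
/-- Reverse Hölder fractional inequality on time scales, specialized to `T = ℤ`. -/
theorem bht_reverse_holder_inequality_int (α : ℝ) (hα0 : 0 < α) (hα1 : α ≤ 1)
    (a b : ℕ) (ha : 1 ≤ a) (hab : a < b)
    (f g h : ℕ → ℝ) (hf0 : ∀ t ∈ Finset.Ico a b, f t ≠ 0)
    (p q : ℝ) (hp : p < 0) (hpq : 1 / p + 1 / q = 1) :
    (∑ t ∈ Finset.Ico a b, |f t| ^ p * |h t| * (t : ℝ) ^ (α - 1)) ^ (1 / p) *
        (∑ t ∈ Finset.Ico a b, |g t| ^ q * |h t| * (t : ℝ) ^ (α - 1)) ^ (1 / q) ≤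
      ∑ t ∈ Finset.Ico a b, |f t * g t| * |h t| * (t : ℝ) ^ (α - 1) := by
  set s := Finset.Ico a b with hs
  set w : ℕ → ℝ := fun t => (t : ℝ) ^ (α - 1) with hw
  have hwpos : ∀ t ∈ s, 0 < w t := by
    intro t ht
    have : (0:ℝ) < (t : ℝ) := by
      have := (Finset.mem_Ico.mp ht).1
      have : 1 ≤ t := le_trans ha this
      exact_mod_cast Nat.lt_of_lt_of_le Nat.zero_lt_one this
    exact Real.rpow_pos_of_pos this _
  have hp0 : p ≠ 0 := ne_of_lt hp
  have h1p : 1 / p < 0 := by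
    exact one_div_neg.mpr hp
  have h1q : 1 < 1 / q := by linarith
  have hq0 : 0 < q := by
    by_contra hq
    push_neg at hq
    have : 1 / q ≤ 0 := by
      rcases lt_or_eq_of_le hq with h' | h'
      · exact le_of_lt (one_div_neg.mpr h')
      · simp [h']
    linarith
  have hqne : q ≠ 0 := ne_of_gt hq0
  have hq1 : q < 1 := by
    have h2 : q * (1 / q) = 1 := mul_one_div_cancel hqne
    nlinarith [mul_lt_mul_of_pos_left h1q hq0]
  -- key exponent identity : q + p * (1 - q) = 0
  have hkey : p * (1 - q) = -q := by
    field_simp at hpq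
    nlinarith [hpq]
  -- nonnegativity of each sum
  have hSp_nonneg : 0 ≤ ∑ t ∈ s, |f t| ^ p * |h t| * w t :=
    Finset.sum_nonneg fun t ht => by positivity
  have hSq_nonneg : 0 ≤ ∑ t ∈ s, |g t| ^ q * |h t| * w t :=
    Finset.sum_nonneg fun t ht => by positivity
  have hS1_nonneg : 0 ≤ ∑ t ∈ s, |f t * g t| * |h t| * w t :=
    Finset.sum_nonneg fun t ht => by positivity
  rcases eq_or_lt_of_le hSp_nonneg with hSp | hSp
  · rw [← hSp, Real.zero_rpow (by positivity : 1 / p ≠ 0), zero_mul]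
    exact hS1_nonneg
  rcases eq_or_lt_of_le hSq_nonneg with hSq | hSq
  · rw [← hSq, Real.zero_rpow (by positivity : (1 : ℝ) / q ≠ 0), mul_zero]
    exact hS1_nonneg
  -- main case: apply forward Hölder with exponents 1/q and 1/(1-q)
  set u : ℕ → ℝ := fun t => (|f t * g t| * |h t| * w t) ^ q with hu
  set v : ℕ → ℝ := fun t => (|f t| ^ p * |h t| * w t) ^ (1 - q) with hv
  have hconj : Real.HolderConjugate (1 / q) (1 / (1 - q)) := by
    rw [Real.holderConjugate_iff]
    constructor
    · exact h1q
    · simp only [one_div, inv_inv]; ring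
  have holder := Real.inner_le_Lp_mul_Lq s u v hconj
  -- pointwise identity : u t * v t = |g t| ^ q * |h t| * w t
  have hpt : ∀ t ∈ s, u t * v t = |g t| ^ q * |h t| * w t := by
    intro t ht
    have hft : 0 < |f t| := abs_pos.mpr (hf0 t ht)
    have hwt : 0 < w t := hwpos t ht
    rcases eq_or_lt_of_le (abs_nonneg (h t)) with hht | hht
    · simp only [hu, hv, ← hht, mul_zero, zero_mul,
        Real.zero_rpow hqne, Real.zero_rpow (by linarith : (1:ℝ) - q ≠ 0)]
    · have e1 : u t = |f t| ^ q * |g t| ^ q * |h t| ^ q * w t ^ q := by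
        show (|f t * g t| * |h t| * w t) ^ q = _
        rw [abs_mul]
        rw [Real.mul_rpow (by positivity) (le_of_lt hwt),
            Real.mul_rpow (by positivity) (le_of_lt hht),
            Real.mul_rpow (abs_nonneg _) (abs_nonneg _)]
      have e2 : v t = |f t| ^ (p * (1 - q)) * |h t| ^ (1 - q) * w t ^ (1 - q) := by
        show (|f t| ^ p * |h t| * w t) ^ (1 - q) = _
        rw [Real.mul_rpow (by positivity) (le_of_lt hwt),
            Real.mul_rpow (by positivity) (le_of_lt hht),
            ← Real.rpow_mul (abs_nonneg _)]
      rw [e1, e2]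
      rw [show |f t| ^ q * |g t| ^ q * |h t| ^ q * w t ^ q *
          (|f t| ^ (p * (1 - q)) * |h t| ^ (1 - q) * w t ^ (1 - q)) =
          (|f t| ^ q * |f t| ^ (p * (1 - q))) * |g t| ^ q *
          (|h t| ^ q * |h t| ^ (1 - q)) * (w t ^ q * w t ^ (1 - q)) by ring,
        ← Real.rpow_add hft, ← Real.rpow_add hht, ← Real.rpow_add hwt, hkey]
      norm_num
  have hsum_uv : ∑ t ∈ s, u t * v t = ∑ t ∈ s, |g t| ^ q * |h t| * w t :=
    Finset.sum_congr rfl hpt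
  have hsum_u : ∑ t ∈ s, |u t| ^ (1 / q) = ∑ t ∈ s, |f t * g t| * |h t| * w t := by
    refine Finset.sum_congr rfl fun t ht => ?_
    have hwt := hwpos t ht
    have hbase : (0:ℝ) ≤ |f t * g t| * |h t| * w t := by positivity
    show |(|f t * g t| * |h t| * w t) ^ q| ^ (1 / q) = _
    rw [abs_of_nonneg (Real.rpow_nonneg hbase q),
        ← Real.rpow_mul hbase, mul_one_div_cancel hqne, Real.rpow_one]
  have hsum_v : ∑ t ∈ s, |v t| ^ (1 / (1 - q)) = ∑ t ∈ s, |f t| ^ p * |h t| * w t := by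
    refine Finset.sum_congr rfl fun t ht => ?_
    have hwt := hwpos t ht
    have hbase : (0:ℝ) ≤ |f t| ^ p * |h t| * w t := by positivity
    show |(|f t| ^ p * |h t| * w t) ^ (1 - q)| ^ (1 / (1 - q)) = _
    rw [abs_of_nonneg (Real.rpow_nonneg hbase _),
        ← Real.rpow_mul hbase, mul_one_div_cancel (by linarith : (1:ℝ) - q ≠ 0),
        Real.rpow_one]
  rw [hsum_uv, hsum_u, hsum_v] at holder
  rw [one_div_one_div, one_div_one_div] at holder
  -- now holder : S_q ≤ S_1 ^ q * S_p ^ (1 - q)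
  set Sp := ∑ t ∈ s, |f t| ^ p * |h t| * w t
  set Sq := ∑ t ∈ s, |g t| ^ q * |h t| * w t
  set S1 := ∑ t ∈ s, |f t * g t| * |h t| * w t
  have hS1 : 0 < S1 := by
    rcases eq_or_lt_of_le hS1_nonneg with h' | h'
    · exfalso
      rw [← h'] at holder
      rw [Real.zero_rpow hqne, zero_mul] at holder
      linarith
    · exact h'
  -- raise holder to the power 1/q
  have step : Sq ^ (1 / q) ≤ S1 * Sp ^ (-(1 / p)) := by
    have hrw : (S1 ^ q * Sp ^ (1 - q)) ^ (1 / q) = S1 * Sp ^ (-(1 / p)) := by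
      rw [Real.mul_rpow (Real.rpow_nonneg (le_of_lt hS1) _)
          (Real.rpow_nonneg (le_of_lt hSp) _),
          ← Real.rpow_mul (le_of_lt hS1), ← Real.rpow_mul (le_of_lt hSp),
          mul_one_div_cancel hqne, Real.rpow_one]
      congr 1
      have : (1 - q) * (1 / q) = -(1 / p) := by
        field_simp
        linarith [hpq]
      rw [this]
    calc Sq ^ (1 / q) ≤ (S1 ^ q * Sp ^ (1 - q)) ^ (1 / q) :=
          Real.rpow_le_rpow (le_of_lt hSq) holder (by positivity)
      _ = S1 * Sp ^ (-(1 / p)) := hrw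
  have hSpp : 0 < Sp ^ (1 / p) := Real.rpow_pos_of_pos hSp _
  calc Sp ^ (1 / p) * Sq ^ (1 / q)
      ≤ Sp ^ (1 / p) * (S1 * Sp ^ (-(1 / p))) := by
        exact mul_le_mul_of_nonneg_left step (le_of_lt hSpp)
    _ = S1 * (Sp ^ (1 / p) * Sp ^ (-(1 / p))) := by ring
    _ = S1 := by
        rw [← Real.rpow_add hSp]
        norm_num
end
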